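/- arXiv:1011.5597 — 7 statements merged into one kernel-verified Lean document; each statement's English description precedes it below -/
import Mathlib

section
/- Let M be a twisted homotopical category. For every morphism f: A → A' in mon, there is a weak equivalence of biprincipal bundles from (Ω B̄A' → B̄A' ∖̃ B̄A → B̄A) to (A' → A'⫽A → B̄A); that is, a commuting diagram in which the left vertical map is the counit v_{A'}: Ω B̄A' → A' (a weak equivalence), the middle vertical map B̄A' ∖̃ B̄A → A'⫽A is a weak equivalence, and the right vertical map is the identity of B̄A. -/
/-!
Statement 0 (Lemma 1.10(1) of Farjoun–Hess, "Normal and conormal maps in homotopy theory").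

In a twisted homotopical category, for every morphism `f : A ⟶ A'` of monoids there is a
weak equivalence of biprincipal bundles from
`(Ω B̄A' → B̄A' ∖̃ B̄A → B̄A)` to `(A' → A' ⫽ A → B̄A)`:
the left vertical map is the counit `v_{A'} : Ω B̄ A' → A'` (a weak equivalence), the middle
vertical map `B̄A' ∖̃ B̄A → A' ⫽ A` is a weak equivalence, and the right vertical map is the
identity of `B̄A`.

We model a twisted homotopical category as a homotopical category `(M, w)` (weak equivalences
contain identities and satisfy two-out-of-six) together with full subcategories `Mon` of
augmented monoids and `Comon` of coaugmented comonoids (given abstractly, with underlying-object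
functors into `M`), a cobar/bar adjunction `Ω ⊣ B̄`, and, for every classifying (comonoid) map
`g : C ⟶ B̄ A`, the total object `Tot g` of the corresponding classifiable biprincipal bundle
`A ⟶ Tot g ⟶ C`, with pushforwards along monoid maps and pullbacks along comonoid maps.
The classifying bundle of `A` is `ζ(A) = Tot (𝟙 (B̄ A))`, the classifying bundle of `C` is
`ξ(C) = Tot (u_C)` where `u` is the unit of the adjunction.  The Borel quotient of
`f : A ⟶ A'` is the total object of the bundle classified by `B̄ f`, and the Borel kernel
of `g : C' ⟶ C` is the total object of the bundle classified by `g ≫ u_C`.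
-/

open CategoryTheory

universe v v₁ v₂ u u₁ u₂

/-- A twisted homotopical category (interface form). -/
structure TwistedHomotopicalCategory (M : Type u) [Category.{v} M]
    (Mon : Type u₁) [Category.{v₁} Mon] (Comon : Type u₂) [Category.{v₂} Comon] where
  /-- the weak equivalences of `M` -/
  w : MorphismProperty M
  /-- weak equivalences contain all identities -/
  w_id : ∀ X : M, w (𝟙 X)
  /-- the two-out-of-six property -/
  w_two_out_of_six : ∀ {X Y Z T : M} (r : X ⟶ Y) (s : Y ⟶ Z) (t : Z ⟶ T),
    w (r ≫ s) → w (s ≫ t) → w r ∧ w s ∧ w t ∧ w (r ≫ s ≫ t)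
  /-- underlying object in `M` of a monoid -/
  monU : Mon ⥤ M
  /-- underlying object in `M` of a comonoid -/
  comonU : Comon ⥤ M
  /-- the cobar construction -/
  Om : Comon ⥤ Mon
  /-- the bar construction -/
  Bar : Mon ⥤ Comon
  /-- the cobar/bar adjunction -/
  adj : Om ⊣ Bar
  /-- the monoidal unit -/
  unit : M
  /-- the unit of an (augmented) monoid -/
  monUnit : ∀ A : Mon, unit ⟶ monU.obj A
  /-- the augmentation of an (augmented) monoid -/
  monAug : ∀ A : Mon, monU.obj A ⟶ unit
  /-- the counit of a (coaugmented) comonoid -/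
  comonCounit : ∀ C : Comon, comonU.obj C ⟶ unit
  /-- the coaugmentation of a (coaugmented) comonoid -/
  comonCoaug : ∀ C : Comon, unit ⟶ comonU.obj C
  /-- total object of the classifiable biprincipal bundle with fibre monoid `A`, base
  comonoid `C`, classified by `g : C ⟶ B̄ A`. -/
  Tot : ∀ {C : Comon} {A : Mon}, (C ⟶ Bar.obj A) → M
  /-- inclusion of the fibre monoid into the total object (a map of right `A`-modules) -/
  totI : ∀ {C : Comon} {A : Mon} (g : C ⟶ Bar.obj A), monU.obj A ⟶ Tot g
  /-- projection of the total object onto the base (a map of left `C`-comodules) -/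
  totP : ∀ {C : Comon} {A : Mon} (g : C ⟶ Bar.obj A), Tot g ⟶ comonU.obj C
  /-- pushforward of a classifiable biprincipal bundle along a monoid map:
  `f_* (Tot g) = Tot (g ≫ B̄ f)`, with its canonical comparison map. -/
  push : ∀ {C : Comon} {A A' : Mon} (g : C ⟶ Bar.obj A) (f : A ⟶ A'),
    Tot g ⟶ Tot (g ≫ Bar.map f)
  push_i : ∀ {C : Comon} {A A' : Mon} (g : C ⟶ Bar.obj A) (f : A ⟶ A'),
    totI g ≫ push g f = monU.map f ≫ totI (g ≫ Bar.map f)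
  push_p : ∀ {C : Comon} {A A' : Mon} (g : C ⟶ Bar.obj A) (f : A ⟶ A'),
    push g f ≫ totP (g ≫ Bar.map f) = totP g
  /-- pullback of a classifiable biprincipal bundle along a comonoid map:
  `h^* (Tot g) = Tot (h ≫ g)`, with its canonical comparison map. -/
  pull : ∀ {C' C : Comon} {A : Mon} (h : C' ⟶ C) (g : C ⟶ Bar.obj A),
    Tot (h ≫ g) ⟶ Tot g
  pull_i : ∀ {C' C : Comon} {A : Mon} (h : C' ⟶ C) (g : C ⟶ Bar.obj A),
    totI (h ≫ g) ≫ pull h g = totI g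
  pull_p : ∀ {C' C : Comon} {A : Mon} (h : C' ⟶ C) (g : C ⟶ Bar.obj A),
    pull h g ≫ totP g = totP (h ≫ g) ≫ comonU.map h
  /-- axiom (1): the unit of the cobar/bar adjunction is a weak equivalence -/
  unit_w : ∀ C : Comon, w (comonU.map (adj.unit.app C))
  /-- axiom (1): the counit of the cobar/bar adjunction is a weak equivalence -/
  counit_w : ∀ A : Mon, w (monU.map (adj.counit.app A))
  /-- axiom (2): `Ω` is homotopical -/
  Om_w : ∀ {C C' : Comon} (g : C ⟶ C'), w (comonU.map g) → w (monU.map (Om.map g))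
  /-- axiom (2): `B̄` is homotopical -/
  Bar_w : ∀ {A A' : Mon} (f : A ⟶ A'), w (monU.map f) → w (comonU.map (Bar.map f))
  /-- axiom (3): `𝓔 A ⟶ B̄ A ⟶ I` is a weak equivalence, where `𝓔 A = Tot (𝟙 (B̄ A))` -/
  E_acyclic : ∀ A : Mon, w (totP (𝟙 (Bar.obj A)) ≫ comonCounit (Bar.obj A))
  /-- axiom (4): `I ⟶ Ω C ⟶ 𝓟 C` is a weak equivalence, where `𝓟 C = Tot (u_C)` -/
  P_acyclic : ∀ C : Comon, w (monUnit (Om.obj C) ≫ totI (adj.unit.app C))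
  /-- axiom (5): pushforward of a classifiable biprincipal bundle along a weak
  equivalence of monoids is a weak equivalence of bundles -/
  push_w : ∀ {C : Comon} {A A' : Mon} (g : C ⟶ Bar.obj A) (f : A ⟶ A'),
    w (monU.map f) → w (push g f)
  /-- axiom (6): pullback of a classifiable biprincipal bundle along a weak
  equivalence of comonoids is a weak equivalence of bundles -/
  pull_w : ∀ {C' C : Comon} {A : Mon} (h : C' ⟶ C) (g : C ⟶ Bar.obj A),
    w (comonU.map h) → w (pull h g)

namespace TwistedHomotopicalCategory

variable {M : Type u} [Category.{v} M] {Mon : Type u₁} [Category.{v₁} Mon]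
  {Comon : Type u₂} [Category.{v₂} Comon]
  (T : TwistedHomotopicalCategory M Mon Comon)

/-- The Borel (homotopy) quotient `A' ⫽ A` of a monoid map `f : A ⟶ A'`: the total object of
the biprincipal bundle classified by `B̄ f`. -/
def borelQuot {A A' : Mon} (f : A ⟶ A') : M := T.Tot (T.Bar.map f)

/-- `π_f : A' ⟶ A' ⫽ A` -/
def πmap {A A' : Mon} (f : A ⟶ A') : T.monU.obj A' ⟶ T.borelQuot f := T.totI (T.Bar.map f)

/-- `δ_f : A' ⫽ A ⟶ B̄ A` -/
def δmap {A A' : Mon} (f : A ⟶ A') : T.borelQuot f ⟶ T.comonU.obj (T.Bar.obj A) :=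
  T.totP (T.Bar.map f)

/-- The Borel (homotopy) kernel `C ∖̃ C'` of a comonoid map `g : C' ⟶ C`: the total object of
the biprincipal bundle classified by `g ≫ u_C`. -/
def borelKer {C' C : Comon} (g : C' ⟶ C) : M := T.Tot (g ≫ T.adj.unit.app C)

/-- `∂_g : Ω C ⟶ C ∖̃ C'` -/
def delMap {C' C : Comon} (g : C' ⟶ C) : T.monU.obj (T.Om.obj C) ⟶ T.borelKer g :=
  T.totI (g ≫ T.adj.unit.app C)

/-- `ι_g : C ∖̃ C' ⟶ C'` -/
def ιmap {C' C : Comon} (g : C' ⟶ C) : T.borelKer g ⟶ T.comonU.obj C' :=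
  T.totP (g ≫ T.adj.unit.app C)

end TwistedHomotopicalCategory

open TwistedHomotopicalCategory

namespace TwistedHomotopicalCategory

lemma push_aux {M : Type u} [Category.{v} M] {Mon : Type u₁} [Category.{v₁} Mon]
    {Comon : Type u₂} [Category.{v₂} Comon]
    (T : TwistedHomotopicalCategory M Mon Comon)
    {C : Comon} {A A' : Mon} (g : C ⟶ T.Bar.obj A) (f' : A ⟶ A')
    (g2 : C ⟶ T.Bar.obj A') (h : g ≫ T.Bar.map f' = g2)
    (hw : T.w (T.monU.map f')) :
    ∃ m : T.Tot g ⟶ T.Tot g2,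
      T.w m ∧ T.totI g ≫ m = T.monU.map f' ≫ T.totI g2 ∧ m ≫ T.totP g2 = T.totP g := by
  subst h
  exact ⟨T.push g f', T.push_w g f' hw, T.push_i g f', T.push_p g f'⟩

end TwistedHomotopicalCategory

/-- (Lemma 1.10(1).)  For every morphism `f : A ⟶ A'` in `mon`, there is a
weak equivalence of biprincipal bundles from `(Ω B̄A' → B̄A' ∖̃ B̄A → B̄A)` to
`(A' → A' ⫽ A → B̄A)`: a commuting diagram whose left vertical map is the counit
`v_{A'} : Ω B̄ A' ⟶ A'` (a weak equivalence), whose middle vertical map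
`B̄A' ∖̃ B̄A ⟶ A' ⫽ A` is a weak equivalence, and whose right vertical map is the identity
of `B̄ A`. -/
theorem normal_conormal_stmt0
    {M : Type u} [Category.{v} M] {Mon : Type u₁} [Category.{v₁} Mon]
    {Comon : Type u₂} [Category.{v₂} Comon]
    (T : TwistedHomotopicalCategory M Mon Comon)
    {A A' : Mon} (f : A ⟶ A') :
    T.w (T.monU.map (T.adj.counit.app A')) ∧
    ∃ m : T.borelKer (T.Bar.map f) ⟶ T.borelQuot f,
      T.w m ∧
      T.delMap (T.Bar.map f) ≫ m = T.monU.map (T.adj.counit.app A') ≫ T.πmap f ∧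
      m ≫ T.δmap f = T.ιmap (T.Bar.map f) := by
  refine ⟨T.counit_w A', ?_⟩
  have h : (T.Bar.map f ≫ T.adj.unit.app (T.Bar.obj A')) ≫ T.Bar.map (T.adj.counit.app A')
      = T.Bar.map f := by
    rw [Category.assoc, T.adj.right_triangle_components, Category.comp_id]
  obtain ⟨m, hm, h1, h2⟩ := T.push_aux (T.Bar.map f ≫ T.adj.unit.app (T.Bar.obj A'))
    (T.adj.counit.app A') (T.Bar.map f) h (T.counit_w A')
  exact ⟨m, hm, h1, h2⟩
end

section
/- Let M be a twisted homotopical category. For every morphism g: C' → C in comon, there is a weak equivalence of biprincipal bundles from (ΩC → C ∖̃ C' → C') to (ΩC → ΩC ⫽ ΩC' → B̄ΩC'); that is, a commuting diagram in which the left vertical map is the identity of ΩC, the middle vertical map C ∖̃ C' → ΩC ⫽ ΩC' is a weak equivalence, and the right vertical map is the unit u_{C'}: C' → B̄ΩC' (a weak equivalence). -/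
/-!
Statement 0 (Lemma 1.10(1) of Farjoun–Hess, "Normal and conormal maps in homotopy theory").

In a twisted homotopical category, for every morphism `f : A ⟶ A'` of monoids there is a
weak equivalence of biprincipal bundles from
`(Ω B̄A' → B̄A' ∖̃ B̄A → B̄A)` to `(A' → A' ⫽ A → B̄A)`:
the left vertical map is the counit `v_{A'} : Ω B̄ A' → A'` (a weak equivalence), the middle
vertical map `B̄A' ∖̃ B̄A → A' ⫽ A` is a weak equivalence, and the right vertical map is the
identity of `B̄A`.

We model a twisted homotopical category as a homotopical category `(M, w)` (weak equivalences
contain identities and satisfy two-out-of-six) together with full subcategories `Mon` of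
augmented monoids and `Comon` of coaugmented comonoids (given abstractly, with underlying-object
functors into `M`), a cobar/bar adjunction `Ω ⊣ B̄`, and, for every classifying (comonoid) map
`g : C ⟶ B̄ A`, the total object `Tot g` of the corresponding classifiable biprincipal bundle
`A ⟶ Tot g ⟶ C`, with pushforwards along monoid maps and pullbacks along comonoid maps.
The classifying bundle of `A` is `ζ(A) = Tot (𝟙 (B̄ A))`, the classifying bundle of `C` is
`ξ(C) = Tot (u_C)` where `u` is the unit of the adjunction.  The Borel quotient of
`f : A ⟶ A'` is the total object of the bundle classified by `B̄ f`, and the Borel kernel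
of `g : C' ⟶ C` is the total object of the bundle classified by `g ≫ u_C`.
-/

open CategoryTheory

universe v v₁ v₂ u u₁ u₂

open TwistedHomotopicalCategory

/-- (Lemma 1.10(2).)  For every morphism `g : C' ⟶ C` in `comon`, there is a
weak equivalence of biprincipal bundles from `(Ω C → C ∖̃ C' → C')` to
`(Ω C → Ω C ⫽ Ω C' → B̄ Ω C')`: a commuting diagram whose left vertical map is the identity
of `Ω C`, whose middle vertical map `C ∖̃ C' ⟶ Ω C ⫽ Ω C'` is a weak equivalence, and whose
right vertical map is the unit `u_{C'} : C' ⟶ B̄ Ω C'` (a weak equivalence). -/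
theorem normal_conormal_stmt1
    {M : Type u} [Category.{v} M] {Mon : Type u₁} [Category.{v₁} Mon]
    {Comon : Type u₂} [Category.{v₂} Comon]
    (T : TwistedHomotopicalCategory M Mon Comon)
    {C' C : Comon} (g : C' ⟶ C) :
    T.w (T.comonU.map (T.adj.unit.app C')) ∧
    ∃ m : T.borelKer g ⟶ T.borelQuot (T.Om.map g),
      T.w m ∧
      T.delMap g ≫ m = T.πmap (T.Om.map g) ∧
      m ≫ T.δmap (T.Om.map g) = T.ιmap g ≫ T.comonU.map (T.adj.unit.app C') := by
  have h : g ≫ T.adj.unit.app C = T.adj.unit.app C' ≫ T.Bar.map (T.Om.map g) := by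
    simpa using T.adj.unit.naturality g
  refine ⟨T.unit_w C', ?_⟩
  simp only [borelKer, borelQuot, delMap, ιmap, πmap, δmap]
  rw [h]
  exact ⟨T.pull (T.adj.unit.app C') (T.Bar.map (T.Om.map g)),
    T.pull_w _ _ (T.unit_w C'), T.pull_i _ _, T.pull_p _ _⟩
end

section
/- In a twisted homotopical category, a commutative square in mon with horizontal maps f: A → A' and g: B → B' and vertical maps α: A → B and α': A' → B' that are weak equivalences induces a weak equivalence of Borel quotients A'⫽A → B'⫽B. -/
/-!
Statement 0 (Lemma 1.10(1) of Farjoun–Hess, "Normal and conormal maps in homotopy theory").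

In a twisted homotopical category, for every morphism `f : A ⟶ A'` of monoids there is a
weak equivalence of biprincipal bundles from
`(Ω B̄A' → B̄A' ∖̃ B̄A → B̄A)` to `(A' → A' ⫽ A → B̄A)`:
the left vertical map is the counit `v_{A'} : Ω B̄ A' → A'` (a weak equivalence), the middle
vertical map `B̄A' ∖̃ B̄A → A' ⫽ A` is a weak equivalence, and the right vertical map is the
identity of `B̄A`.

We model a twisted homotopical category as a homotopical category `(M, w)` (weak equivalences
contain identities and satisfy two-out-of-six) together with full subcategories `Mon` of
augmented monoids and `Comon` of coaugmented comonoids (given abstractly, with underlying-object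
functors into `M`), a cobar/bar adjunction `Ω ⊣ B̄`, and, for every classifying (comonoid) map
`g : C ⟶ B̄ A`, the total object `Tot g` of the corresponding classifiable biprincipal bundle
`A ⟶ Tot g ⟶ C`, with pushforwards along monoid maps and pullbacks along comonoid maps.
The classifying bundle of `A` is `ζ(A) = Tot (𝟙 (B̄ A))`, the classifying bundle of `C` is
`ξ(C) = Tot (u_C)` where `u` is the unit of the adjunction.  The Borel quotient of
`f : A ⟶ A'` is the total object of the bundle classified by `B̄ f`, and the Borel kernel
of `g : C' ⟶ C` is the total object of the bundle classified by `g ≫ u_C`.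
-/

open CategoryTheory

universe v v₁ v₂ u u₁ u₂

open TwistedHomotopicalCategory

/-!
Since `B̄` is a functor, the square of monoids gives `B̄f ≫ B̄α' = B̄α ≫ B̄g`. The bundle classified
by `B̄f` pushed forward along `α'` is therefore the one classified by `B̄α ≫ B̄g`, which pulls back
along `B̄α` to the bundle classified by `B̄g`. Pushforward along the weak equivalence `α'` and
pullback along the weak equivalence `B̄α` are weak equivalences of bundles, so their composite is too.
-/

namespace TwistedHomotopicalCategory

variable {M : Type u} [Category.{v} M] {Mon : Type u₁} [Category.{v₁} Mon]
  {Comon : Type u₂} [Category.{v₂} Comon]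
  (T : TwistedHomotopicalCategory M Mon Comon)

lemma w_comp {X Y Z : M} {r : X ⟶ Y} {s : Y ⟶ Z} (hr : T.w r) (hs : T.w s) :
    T.w (r ≫ s) := by
  simpa using (T.w_two_out_of_six r (𝟙 Y) s (by simpa) (by simpa)).2.2.2

lemma w_eqToHom {X Y : M} (h : X = Y) : T.w (eqToHom h) := by
  subst h
  exact T.w_id X

lemma totI_eqToHom {C : Comon} {A : Mon} {g g' : C ⟶ T.Bar.obj A} (h : g = g') :
    T.totI g ≫ eqToHom (congrArg T.Tot h) = T.totI g' := by
  subst h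
  simp

lemma eqToHom_totP {C : Comon} {A : Mon} {g g' : C ⟶ T.Bar.obj A} (h : g = g') :
    eqToHom (congrArg T.Tot h) ≫ T.totP g' = T.totP g := by
  subst h
  simp

section TotMap

variable {C C' : Comon} {A A' : Mon} {g : C ⟶ T.Bar.obj A} {g' : C' ⟶ T.Bar.obj A'}
  {a : A ⟶ A'} {c : C ⟶ C'}

def totMap (hsq : g ≫ T.Bar.map a = c ≫ g') : T.Tot g ⟶ T.Tot g' :=
  T.push g a ≫ eqToHom (congrArg T.Tot hsq) ≫ T.pull c g'

lemma totI_totMap (hsq : g ≫ T.Bar.map a = c ≫ g') :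
    T.totI g ≫ T.totMap hsq = T.monU.map a ≫ T.totI g' := by
  rw [totMap, reassoc_of% T.push_i, reassoc_of% T.totI_eqToHom hsq, T.pull_i]

lemma totMap_totP (hsq : g ≫ T.Bar.map a = c ≫ g') :
    T.totMap hsq ≫ T.totP g' = T.totP g ≫ T.comonU.map c := by
  rw [totMap, Category.assoc, Category.assoc, T.pull_p, reassoc_of% T.eqToHom_totP hsq,
    reassoc_of% T.push_p]

lemma w_totMap (hsq : g ≫ T.Bar.map a = c ≫ g') (ha : T.w (T.monU.map a))
    (hc : T.w (T.comonU.map c)) : T.w (T.totMap hsq) :=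
  T.w_comp (T.push_w g a ha) (T.w_comp (T.w_eqToHom _) (T.pull_w c g' hc))

end TotMap

end TwistedHomotopicalCategory

/-- (Remark 1.8 of the paper.)  In a twisted homotopical category, a
commutative square in `mon`, with horizontal maps `f : A ⟶ A'` and `g : B ⟶ B'` and with
vertical maps `α : A ⟶ B` and `α' : A' ⟶ B'` that are weak equivalences, induces a weak
equivalence of Borel quotients `A' ⫽ A ⟶ B' ⫽ B` (a map of bundles compatible with
`π` and `δ`). -/
theorem normal_conormal_stmt2
    {M : Type u} [Category.{v} M] {Mon : Type u₁} [Category.{v₁} Mon]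
    {Comon : Type u₂} [Category.{v₂} Comon]
    (T : TwistedHomotopicalCategory M Mon Comon)
    {A A' B B' : Mon} (f : A ⟶ A') (g : B ⟶ B') (α : A ⟶ B) (α' : A' ⟶ B')
    (sq : f ≫ α' = α ≫ g)
    (hα : T.w (T.monU.map α)) (hα' : T.w (T.monU.map α')) :
    ∃ m : T.borelQuot f ⟶ T.borelQuot g,
      T.w m ∧
      T.πmap f ≫ m = T.monU.map α' ≫ T.πmap g ∧
      m ≫ T.δmap g = T.δmap f ≫ T.comonU.map (T.Bar.map α) := by
  have hBar : T.Bar.map f ≫ T.Bar.map α' = T.Bar.map α ≫ T.Bar.map g := by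
    simp only [← Functor.map_comp, sq]
  exact ⟨T.totMap hBar, T.w_totMap hBar hα' (T.Bar_w α hα), T.totI_totMap hBar,
    T.totMap_totP hBar⟩
end

section
/- Let f: A → A' be a morphism in mon in a twisted homotopical category. If the Borel quotient A'⫽A admits a monoid structure such that π_f: A' → A'⫽A is a monoid morphism, and there is a weak equivalence of left B̄A'-comodules π̃: (A'⫽A)⫽A' → B̄A making the square with horizontal maps (π_{π_f}, δ_{π_f}) and (δ_f, B̄f) commute (i.e. π̃ ∘ π_{π_f} = δ_f and B̄f ∘ π̃ = δ_{π_f} composed appropriately), then f is h-normal with normality structure B̄π_f: B̄A' → B̄(A'⫽A). -/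
/-!
Statement 0 (Lemma 1.10(1) of Farjoun–Hess, "Normal and conormal maps in homotopy theory").

In a twisted homotopical category, for every morphism `f : A ⟶ A'` of monoids there is a
weak equivalence of biprincipal bundles from
`(Ω B̄A' → B̄A' ∖̃ B̄A → B̄A)` to `(A' → A' ⫽ A → B̄A)`:
the left vertical map is the counit `v_{A'} : Ω B̄ A' → A'` (a weak equivalence), the middle
vertical map `B̄A' ∖̃ B̄A → A' ⫽ A` is a weak equivalence, and the right vertical map is the
identity of `B̄A`.

We model a twisted homotopical category as a homotopical category `(M, w)` (weak equivalences
contain identities and satisfy two-out-of-six) together with full subcategories `Mon` of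
augmented monoids and `Comon` of coaugmented comonoids (given abstractly, with underlying-object
functors into `M`), a cobar/bar adjunction `Ω ⊣ B̄`, and, for every classifying (comonoid) map
`g : C ⟶ B̄ A`, the total object `Tot g` of the corresponding classifiable biprincipal bundle
`A ⟶ Tot g ⟶ C`, with pushforwards along monoid maps and pullbacks along comonoid maps.
The classifying bundle of `A` is `ζ(A) = Tot (𝟙 (B̄ A))`, the classifying bundle of `C` is
`ξ(C) = Tot (u_C)` where `u` is the unit of the adjunction.  The Borel quotient of
`f : A ⟶ A'` is the total object of the bundle classified by `B̄ f`, and the Borel kernel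
of `g : C' ⟶ C` is the total object of the bundle classified by `g ≫ u_C`.
-/

open CategoryTheory

universe v v₁ v₂ u u₁ u₂

open TwistedHomotopicalCategory

/-! ### Extended bundles and h-normality -/

namespace TwistedHomotopicalCategory

variable {M : Type u} [Category.{v} M] {Mon : Type u₁} [Category.{v₁} Mon]
  {Comon : Type u₂} [Category.{v₂} Comon]
  (T : TwistedHomotopicalCategory M Mon Comon)

/-- An extended bundle `A → Mo → N → C`: `A` is a monoid, `Mo` a right `A`-module with the
first map `A`-linear, `C` a comonoid, `N` a left `C`-comodule with the last map a comodule
map.  (The module and comodule structures are implicit in this interface.) -/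
structure ExtBundle where
  A : Mon
  Mo : M
  N : M
  C : Comon
  j : T.monU.obj A ⟶ Mo
  d : Mo ⟶ N
  p : N ⟶ T.comonU.obj C

/-- An elementary equivalence of extended bundles: a morphism of extended bundles all of whose
components are weak equivalences. -/
def ElemEquiv (E F : T.ExtBundle) : Prop :=
  ∃ (α : E.A ⟶ F.A) (μ : E.Mo ⟶ F.Mo) (ν : E.N ⟶ F.N) (β : E.C ⟶ F.C),
    T.w (T.monU.map α) ∧ T.w μ ∧ T.w ν ∧ T.w (T.comonU.map β) ∧
    E.j ≫ μ = T.monU.map α ≫ F.j ∧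
    E.d ≫ ν = μ ≫ F.d ∧
    E.p ≫ T.comonU.map β = ν ≫ F.p

/-- Equivalence of extended bundles: a zigzag of elementary equivalences. -/
def BundleEquiv : T.ExtBundle → T.ExtBundle → Prop :=
  Relation.EqvGen T.ElemEquiv

/-- The truncated Nomura–Puppe sequence `τ(f) = (A' → A'⫽A → B̄A → B̄A')` of a monoid
morphism `f : A ⟶ A'`. -/
def tau {A A' : Mon} (f : A ⟶ A') : T.ExtBundle where
  A := A'
  Mo := T.borelQuot f
  N := T.comonU.obj (T.Bar.obj A)
  C := T.Bar.obj A'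
  j := T.πmap f
  d := T.δmap f
  p := T.comonU.map (T.Bar.map f)

/-- The truncated dual Nomura–Puppe sequence `θ(g) = (ΩC' → ΩC → C ∖̃ C' → C')` of a comonoid
morphism `g : C' ⟶ C`. -/
def theta {C' C : Comon} (g : C' ⟶ C) : T.ExtBundle where
  A := T.Om.obj C'
  Mo := T.monU.obj (T.Om.obj C)
  N := T.borelKer g
  C := C'
  j := T.monU.map (T.Om.map g)
  d := T.delMap g
  p := T.ιmap g

/-- The pair `(f, g)` is normal if `τ(f)` and `θ(g)` are equivalent extended bundles;
then `f` is h-normal with normality structure `g`, and `g` is h-conormal with conormality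
structure `f`. -/
def IsNormalPair {A A' : Mon} (f : A ⟶ A') {C' C : Comon} (g : C' ⟶ C) : Prop :=
  T.BundleEquiv (T.tau f) (T.theta g)

/-- `f` is h-normal if there is a comonoid map `g` such that `(f, g)` is a normal pair. -/
def IsHNormal {A A' : Mon} (f : A ⟶ A') : Prop :=
  ∃ (C' C : Comon) (g : C' ⟶ C), T.IsNormalPair f g

/-- `g` is h-conormal if there is a monoid map `f` such that `(f, g)` is a normal pair. -/
def IsHConormal {C' C : Comon} (g : C' ⟶ C) : Prop :=
  ∃ (A A' : Mon) (f : A ⟶ A'), T.IsNormalPair f g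

end TwistedHomotopicalCategory

/-!
The bundle `A' → Q → Q ⫽ A' → B̄A'` of the monoid map `p : A' ⟶ Q` modelling `π_f` sits between
the two truncated sequences. The hypotheses on `π̃` make `(𝟙, φ, π̃, 𝟙)` a weak equivalence from
it to `τ(f)`. On the other side, pushing the bundle classified by `B̄p ≫ u` forward along the
counit `ε_Q : ΩB̄Q ⟶ Q` gives back, by a triangle identity, the bundle classified by `B̄p`; with
the counits on the monoid terms this is a weak equivalence from `θ(B̄p)` to it.
-/

namespace TwistedHomotopicalCategory

variable {M : Type u} [Category.{v} M] {Mon : Type u₁} [Category.{v₁} Mon]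
  {Comon : Type u₂} [Category.{v₂} Comon]
  (T : TwistedHomotopicalCategory M Mon Comon)

lemma w_of_iso {X Y : M} (e : X ≅ Y) : T.w e.hom := by
  have hom_inv : T.w (e.hom ≫ e.inv) := by rw [e.hom_inv_id]; exact T.w_id X
  have inv_hom : T.w (e.inv ≫ e.hom) := by rw [e.inv_hom_id]; exact T.w_id Y
  exact (T.w_two_out_of_six e.hom e.inv e.hom hom_inv inv_hom).1

lemma w_monU_map_id (A : Mon) : T.w (T.monU.map (𝟙 A)) := by
  rw [T.monU.map_id]; exact T.w_id _

lemma w_comonU_map_id (C : Comon) : T.w (T.comonU.map (𝟙 C)) := by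
  rw [T.comonU.map_id]; exact T.w_id _

lemma totI_comp_eqToHom {C : Comon} {A : Mon} {g₁ g₂ : C ⟶ T.Bar.obj A} (e : g₁ = g₂) :
    T.totI g₁ ≫ eqToHom (congrArg T.Tot e) = T.totI g₂ := by
  subst e; simp

lemma eqToHom_comp_totP {C : Comon} {A : Mon} {g₁ g₂ : C ⟶ T.Bar.obj A} (e : g₁ = g₂) :
    eqToHom (congrArg T.Tot e) ≫ T.totP g₂ = T.totP g₁ := by
  subst e; simp

lemma w_comp_eqToHom {C : Comon} {A : Mon} {g₁ g₂ : C ⟶ T.Bar.obj A} (e : g₁ = g₂)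
    {X : M} {x : X ⟶ T.Tot g₁} (hx : T.w x) : T.w (x ≫ eqToHom (congrArg T.Tot e)) := by
  subst e; simpa using hx

lemma comp_unit_comp_bar_map_counit {C : Comon} {A : Mon} (g : C ⟶ T.Bar.obj A) :
    (g ≫ T.adj.unit.app (T.Bar.obj A)) ≫ T.Bar.map (T.adj.counit.app A) = g := by
  rw [Category.assoc, T.adj.right_triangle_components, Category.comp_id]

/-- Pushing forward along the counit `ε_A` undoes precomposition with the unit. -/
def pushCounit {C : Comon} {A : Mon} (g : C ⟶ T.Bar.obj A) :
    T.Tot (g ≫ T.adj.unit.app (T.Bar.obj A)) ⟶ T.Tot g :=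
  T.push _ (T.adj.counit.app A) ≫
    eqToHom (congrArg T.Tot (T.comp_unit_comp_bar_map_counit g))

lemma totI_pushCounit {C : Comon} {A : Mon} (g : C ⟶ T.Bar.obj A) :
    T.totI (g ≫ T.adj.unit.app (T.Bar.obj A)) ≫ T.pushCounit g =
      T.monU.map (T.adj.counit.app A) ≫ T.totI g := by
  rw [pushCounit, ← Category.assoc, push_i, Category.assoc,
    T.totI_comp_eqToHom (T.comp_unit_comp_bar_map_counit g)]

lemma pushCounit_totP {C : Comon} {A : Mon} (g : C ⟶ T.Bar.obj A) :
    T.pushCounit g ≫ T.totP g = T.totP (g ≫ T.adj.unit.app (T.Bar.obj A)) := by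
  rw [pushCounit, Category.assoc, T.eqToHom_comp_totP (T.comp_unit_comp_bar_map_counit g),
    push_p]

lemma w_pushCounit {C : Comon} {A : Mon} (g : C ⟶ T.Bar.obj A) : T.w (T.pushCounit g) :=
  T.w_comp_eqToHom (T.comp_unit_comp_bar_map_counit g) (T.push_w _ _ (T.counit_w A))

/-- The first four terms `A → A' → A' ⫽ A → B̄A` of the Nomura–Puppe sequence of `f`. -/
def nomuraPuppeHead {A A' : Mon} (f : A ⟶ A') : T.ExtBundle where
  A := A
  Mo := T.monU.obj A'
  N := T.borelQuot f
  C := T.Bar.obj A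
  j := T.monU.map f
  d := T.πmap f
  p := T.δmap f

lemma elemEquiv_theta_bar_nomuraPuppeHead {A A' : Mon} (f : A ⟶ A') :
    T.ElemEquiv (T.theta (T.Bar.map f)) (T.nomuraPuppeHead f) := by
  refine ⟨T.adj.counit.app A, T.monU.map (T.adj.counit.app A'), T.pushCounit (T.Bar.map f),
    𝟙 _, T.counit_w A, T.counit_w A', T.w_pushCounit _, T.w_comonU_map_id _, ?j, ?d, ?p⟩
  case j =>
    change T.monU.map (T.Om.map (T.Bar.map f)) ≫ T.monU.map (T.adj.counit.app A') =
      T.monU.map (T.adj.counit.app A) ≫ T.monU.map f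
    rw [← T.monU.map_comp, ← T.monU.map_comp]
    exact congrArg T.monU.map (T.adj.counit.naturality f)
  case d => exact T.totI_pushCounit _
  case p =>
    change T.ιmap (T.Bar.map f) ≫ T.comonU.map (𝟙 _) = T.pushCounit (T.Bar.map f) ≫ T.δmap f
    rw [T.comonU.map_id, Category.comp_id, δmap, pushCounit_totP]
    rfl

lemma elemEquiv_nomuraPuppeHead_tau {A A' Q : Mon} (f : A ⟶ A')
    (φ : T.monU.obj Q ≅ T.borelQuot f) (p : A' ⟶ Q) (hp : T.monU.map p = T.πmap f ≫ φ.inv)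
    (πt : T.borelQuot p ⟶ T.comonU.obj (T.Bar.obj A)) (hπt : T.w πt)
    (sq₁ : φ.inv ≫ T.πmap p ≫ πt = T.δmap f)
    (sq₂ : πt ≫ T.comonU.map (T.Bar.map f) = T.δmap p) :
    T.ElemEquiv (T.nomuraPuppeHead p) (T.tau f) := by
  refine ⟨𝟙 A', φ.hom, πt, 𝟙 _, T.w_monU_map_id _, T.w_of_iso φ, hπt, T.w_comonU_map_id _,
    ?j, ?d, ?p⟩
  case j =>
    change T.monU.map p ≫ φ.hom = T.monU.map (𝟙 A') ≫ T.πmap f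
    rw [hp, T.monU.map_id, Category.id_comp, Category.assoc, φ.inv_hom_id, Category.comp_id]
  case d =>
    change T.πmap p ≫ πt = φ.hom ≫ T.δmap f
    rw [← sq₁, φ.hom_inv_id_assoc]
  case p =>
    change T.δmap p ≫ T.comonU.map (𝟙 _) = πt ≫ T.comonU.map (T.Bar.map f)
    rw [T.comonU.map_id, Category.comp_id, sq₂]

end TwistedHomotopicalCategory

/-- (Lemma 2.7 of the paper.)  Let `f : A ⟶ A'` be a morphism in `mon`.
Suppose the Borel quotient `A' ⫽ A` admits a monoid structure (a monoid `Q` whose underlying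
object is isomorphic to `A' ⫽ A`) with respect to which `π_f : A' ⟶ A' ⫽ A` is a monoid
morphism `p : A' ⟶ Q`, and suppose there is a weak equivalence (of left `B̄A'`-comodules)
`π̃ : (A' ⫽ A) ⫽ A' ⟶ B̄ A` such that the square with horizontal maps
`(π_{π_f}, δ_{π_f})` and `(δ_f, B̄ f)` commutes, i.e. `π̃ ∘ π_{π_f} = δ_f` and
`B̄f ∘ π̃ = δ_{π_f}`.  Then `f` is h-normal with normality structure
`B̄ π_f : B̄ A' ⟶ B̄ (A' ⫽ A)`. -/
theorem normal_conormal_stmt6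
    {M : Type u} [Category.{v} M] {Mon : Type u₁} [Category.{v₁} Mon]
    {Comon : Type u₂} [Category.{v₂} Comon]
    (T : TwistedHomotopicalCategory M Mon Comon)
    {A A' : Mon} (f : A ⟶ A')
    -- a monoid structure on `A' ⫽ A` …
    (Q : Mon) (φ : T.monU.obj Q ≅ T.borelQuot f)
    -- … with respect to which `π_f` is a monoid morphism
    (p : A' ⟶ Q) (hp : T.monU.map p = T.πmap f ≫ φ.inv)
    -- a weak equivalence `π̃ : (A' ⫽ A) ⫽ A' ⟶ B̄ A` …
    (πt : T.borelQuot p ⟶ T.comonU.obj (T.Bar.obj A)) (hπt : T.w πt)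
    -- … such that `π̃ ∘ π_{π_f} = δ_f` and `B̄f ∘ π̃ = δ_{π_f}`
    (sq₁ : φ.inv ≫ T.πmap p ≫ πt = T.δmap f)
    (sq₂ : πt ≫ T.comonU.map (T.Bar.map f) = T.δmap p) :
    T.IsNormalPair f (T.Bar.map p) :=
  have toTau := T.elemEquiv_nomuraPuppeHead_tau f φ p hp πt hπt sq₁ sq₂
  have fromTheta := T.elemEquiv_theta_bar_nomuraPuppeHead p
  .trans _ _ _ (.symm _ _ (.rel _ _ toTau)) (.symm _ _ (.rel _ _ fromTheta))
end

section
/- Let g: C' → C be a morphism in comon in a twisted homotopical category. If the Borel kernel C ∖̃ C' admits a comonoid structure such that ι_g: C ∖̃ C' → C' is a comonoid morphism, and there is a weak equivalence of Ω C'-modules ι̃: ΩC → C' ∖̃ (C ∖̃ C') such that ι̃ ∘ Ωg = ∂_{ι_g} and ι_{ι_g} ∘ ι̃ = ∂_g, then g is h-conormal with conormality structure Ω ι_g: Ω(C ∖̃ C') → ΩC'. -/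
/-!
Statement 0 (Lemma 1.10(1) of Farjoun–Hess, "Normal and conormal maps in homotopy theory").

In a twisted homotopical category, for every morphism `f : A ⟶ A'` of monoids there is a
weak equivalence of biprincipal bundles from
`(Ω B̄A' → B̄A' ∖̃ B̄A → B̄A)` to `(A' → A' ⫽ A → B̄A)`:
the left vertical map is the counit `v_{A'} : Ω B̄ A' → A'` (a weak equivalence), the middle
vertical map `B̄A' ∖̃ B̄A → A' ⫽ A` is a weak equivalence, and the right vertical map is the
identity of `B̄A`.

We model a twisted homotopical category as a homotopical category `(M, w)` (weak equivalences
contain identities and satisfy two-out-of-six) together with full subcategories `Mon` of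
augmented monoids and `Comon` of coaugmented comonoids (given abstractly, with underlying-object
functors into `M`), a cobar/bar adjunction `Ω ⊣ B̄`, and, for every classifying (comonoid) map
`g : C ⟶ B̄ A`, the total object `Tot g` of the corresponding classifiable biprincipal bundle
`A ⟶ Tot g ⟶ C`, with pushforwards along monoid maps and pullbacks along comonoid maps.
The classifying bundle of `A` is `ζ(A) = Tot (𝟙 (B̄ A))`, the classifying bundle of `C` is
`ξ(C) = Tot (u_C)` where `u` is the unit of the adjunction.  The Borel quotient of
`f : A ⟶ A'` is the total object of the bundle classified by `B̄ f`, and the Borel kernel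
of `g : C' ⟶ C` is the total object of the bundle classified by `g ≫ u_C`.
-/

open CategoryTheory

universe v v₁ v₂ u u₁ u₂

open TwistedHomotopicalCategory

/-!
The hypotheses say exactly that `(𝟙, ι̃, φ⁻¹, 𝟙)` is a weak equivalence from `θ(g)` to the
extended bundle `ΩC' → C' ∖̃ K → K → C'` of `i`. By naturality of the unit, the classifying
map `i ≫ u_{C'}` of `C' ∖̃ K` is `u_K ≫ B̄Ωi`, so `C' ∖̃ K` is the pullback along the weak
equivalence `u_K` of the bundle `ΩC' → ΩC' ⫽ ΩK → B̄ΩK`; this is a weak equivalence to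
`τ(Ωi)` with outer components `𝟙` and `u_{C'}`.
-/

namespace TwistedHomotopicalCategory

variable {M : Type u} [Category.{v} M] {Mon : Type u₁} [Category.{v₁} Mon]
  {Comon : Type u₂} [Category.{v₂} Comon]
  (T : TwistedHomotopicalCategory M Mon Comon)

lemma w_of_isIso {X Y : M} (f : X ⟶ Y) [IsIso f] : T.w f := by
  have hl : T.w (f ≫ inv f) := by rw [IsIso.hom_inv_id]; exact T.w_id X
  have hr : T.w (inv f ≫ f) := by rw [IsIso.inv_hom_id]; exact T.w_id Y
  exact (T.w_two_out_of_six f (inv f) f hl hr).1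

lemma exists_w_pull_of_comp_eq {C' C : Comon} {A : Mon} {h : C' ⟶ C} {q : C ⟶ T.Bar.obj A}
    {q' : C' ⟶ T.Bar.obj A} (hq : h ≫ q = q') (hh : T.w (T.comonU.map h)) :
    ∃ μ : T.Tot q' ⟶ T.Tot q, T.w μ ∧ T.totI q' ≫ μ = T.totI q ∧
      μ ≫ T.totP q = T.totP q' ≫ T.comonU.map h := by
  subst hq
  exact ⟨T.pull h q, T.pull_w h q hh, T.pull_i h q, T.pull_p h q⟩

def borelKerBundle {K C' : Comon} (i : K ⟶ C') : T.ExtBundle where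
  A := T.Om.obj C'
  Mo := T.borelKer i
  N := T.comonU.obj K
  C := C'
  j := T.delMap i
  d := T.ιmap i
  p := T.comonU.map i

lemma elemEquiv_borelKerBundle_tau {K C' : Comon} (i : K ⟶ C') :
    T.ElemEquiv (T.borelKerBundle i) (T.tau (T.Om.map i)) := by
  have unit_nat : T.adj.unit.app K ≫ T.Bar.map (T.Om.map i) = i ≫ T.adj.unit.app C' :=
    (T.adj.unit.naturality i).symm
  obtain ⟨μ, hμ, hμi, hμp⟩ := T.exists_w_pull_of_comp_eq unit_nat (T.unit_w K)
  refine ⟨𝟙 (T.Om.obj C'), μ, T.comonU.map (T.adj.unit.app K), T.adj.unit.app C',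
    T.w_of_isIso (T.monU.map (𝟙 _)), hμ, T.unit_w K, T.unit_w C', ?_, hμp.symm, ?_⟩
  · dsimp only [borelKerBundle, tau]
    rw [CategoryTheory.Functor.map_id, Category.id_comp]
    exact hμi
  · simp only [borelKerBundle, tau, ← CategoryTheory.Functor.map_comp, unit_nat]

lemma elemEquiv_theta_borelKerBundle {C' C : Comon} (g : C' ⟶ C) {K : Comon}
    (φ : T.comonU.obj K ≅ T.borelKer g) {i : K ⟶ C'} (hi : T.comonU.map i = φ.hom ≫ T.ιmap g)
    {ιt : T.monU.obj (T.Om.obj C) ⟶ T.borelKer i} (hιt : T.w ιt)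
    (sq₁ : T.monU.map (T.Om.map g) ≫ ιt = T.delMap i)
    (sq₂ : ιt ≫ T.ιmap i ≫ φ.hom = T.delMap g) :
    T.ElemEquiv (T.theta g) (T.borelKerBundle i) := by
  refine ⟨𝟙 (T.Om.obj C'), ιt, φ.inv, 𝟙 C', T.w_of_isIso (T.monU.map (𝟙 _)), hιt,
    T.w_of_isIso φ.inv, T.w_of_isIso (T.comonU.map (𝟙 _)), ?_, ?_, ?_⟩
  · dsimp only [theta, borelKerBundle]
    simpa only [CategoryTheory.Functor.map_id, Category.id_comp] using sq₁
  · simp [theta, borelKerBundle, ← sq₂]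
  · simp [theta, borelKerBundle, hi]

end TwistedHomotopicalCategory

/-- (Lemma 2.8 of the paper.)  Let `g : C' ⟶ C` be a morphism in `comon`.
Suppose the Borel kernel `C ∖̃ C'` admits a comonoid structure (a comonoid `K` whose
underlying object is isomorphic to `C ∖̃ C'`) with respect to which
`ι_g : C ∖̃ C' ⟶ C'` is a comonoid morphism `i : K ⟶ C'`, and suppose there is a weak
equivalence (of right `Ω C'`-modules) `ι̃ : Ω C ⟶ C' ∖̃ (C ∖̃ C')` such that
`ι̃ ∘ Ω g = ∂_{ι_g}` and `ι_{ι_g} ∘ ι̃ = ∂_g`.  Then `g` is h-conormal with conormality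
structure `Ω ι_g : Ω (C ∖̃ C') ⟶ Ω C'`. -/
theorem normal_conormal_stmt7
    {M : Type u} [Category.{v} M] {Mon : Type u₁} [Category.{v₁} Mon]
    {Comon : Type u₂} [Category.{v₂} Comon]
    (T : TwistedHomotopicalCategory M Mon Comon)
    {C' C : Comon} (g : C' ⟶ C)
    -- a comonoid structure on `C ∖̃ C'` …
    (K : Comon) (φ : T.comonU.obj K ≅ T.borelKer g)
    -- … with respect to which `ι_g` is a comonoid morphism
    (i : K ⟶ C') (hi : T.comonU.map i = φ.hom ≫ T.ιmap g)
    -- a weak equivalence `ι̃ : Ω C ⟶ C' ∖̃ (C ∖̃ C')` …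
    (ιt : T.monU.obj (T.Om.obj C) ⟶ T.borelKer i) (hιt : T.w ιt)
    -- … such that `ι̃ ∘ Ω g = ∂_{ι_g}` and `ι_{ι_g} ∘ ι̃ = ∂_g`
    (sq₁ : T.monU.map (T.Om.map g) ≫ ιt = T.delMap i)
    (sq₂ : ιt ≫ T.ιmap i ≫ φ.hom = T.delMap g) :
    T.IsNormalPair (T.Om.map i) g :=
  .symm _ _ <| .trans _ _ _
    (.rel _ _ (T.elemEquiv_theta_borelKerBundle g φ hi hιt sq₁ sq₂))
    (.rel _ _ (T.elemEquiv_borelKerBundle_tau i))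
end

section
/- Let M be a twisted homotopical category and H a bimonoid in M such that 𝓟H admits a monoid structure with respect to which its right ΩH-action, its left H-coaction, and the morphisms i_H: ΩH → 𝓟H and p_H: 𝓟H → H of the classifying bundle ξ(H) are all monoid morphisms. Then for every bimonoid map g: H' → H, the induced morphism ι_g: H ∖̃ H' → H' is a monoid morphism. -/
/-!
The Borel kernel `H ∖̃ H'` is the equalizer of two maps `H' ⊗ 𝓟H ⟶ H' ⊗ (H ⊗ 𝓟H)`, built from the
comultiplication of `H'`, the map `g` and the coaction of `H` on `𝓟H`; all of these are monoid
morphisms, hence so are both maps. The equalizer of two monoid morphisms is a submonoid: the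
multiplication and unit of `H' ⊗ 𝓟H` restricted to it equalize the pair and so lift. Finally
`ι_g` is the inclusion of this submonoid followed by the monoid morphism `H' ⊗ 𝓟H ⟶ H'` induced
by `ε_H ∘ p_H`.
-/

open CategoryTheory MonoidalCategory Limits

universe v u

namespace CategoryTheory.MonObj

variable {C : Type*} [Category C] [MonoidalCategory C] {K T : C} [MonObj T]

lemma tensorHom_comp_mul_comp_eq {S : C} [MonObj S] {u v : T ⟶ S} [IsMonHom u] [IsMonHom v]
    {i : K ⟶ T} (h : i ≫ u = i ≫ v) : ((i ⊗ₘ i) ≫ μ) ≫ u = ((i ⊗ₘ i) ≫ μ) ≫ v := by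
  rw [Category.assoc, Category.assoc, IsMonHom.mul_hom, IsMonHom.mul_hom,
    tensorHom_comp_tensorHom_assoc, tensorHom_comp_tensorHom_assoc, h]

variable (i : K ⟶ T) [Mono i] (mul : K ⊗ K ⟶ K) (one : 𝟙_ C ⟶ K)
  (mul_i : mul ≫ i = (i ⊗ₘ i) ≫ μ) (one_i : one ≫ i = η)

abbrev ofMono : MonObj K where
  one := one
  mul := mul
  one_mul := by
    rw [← cancel_mono i, Category.assoc, mul_i, ← tensorHom_id, tensorHom_comp_tensorHom_assoc,
      one_i, Category.id_comp, one_mul_hom]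
  mul_one := by
    rw [← cancel_mono i, Category.assoc, mul_i, ← id_tensorHom, tensorHom_comp_tensorHom_assoc,
      one_i, Category.id_comp, mul_one_hom]
  mul_assoc := by
    have mul_whiskerRight : (mul ▷ K) ≫ (i ⊗ₘ i) = ((i ⊗ₘ i) ⊗ₘ i) ≫ (μ ▷ T) := by
      rw [← tensorHom_id, tensorHom_comp_tensorHom, mul_i, ← tensorHom_id,
        tensorHom_comp_tensorHom, Category.id_comp, Category.comp_id]
    have whiskerLeft_mul : (K ◁ mul) ≫ (i ⊗ₘ i) = (i ⊗ₘ (i ⊗ₘ i)) ≫ (T ◁ μ) := by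
      rw [← id_tensorHom, tensorHom_comp_tensorHom, mul_i, ← id_tensorHom,
        tensorHom_comp_tensorHom, Category.id_comp, Category.comp_id]
    rw [← cancel_mono i]
    simp only [Category.assoc, mul_i, reassoc_of% mul_whiskerRight, reassoc_of% whiskerLeft_mul,
      MonObj.mul_assoc, associator_naturality_assoc]

lemma isMonHom_ofMono :
    letI := ofMono i mul one mul_i one_i
    IsMonHom i :=
  letI := ofMono i mul one mul_i one_i
  ⟨one_i, mul_i⟩

end CategoryTheory.MonObj

namespace CategoryTheory.Limits.Fork.IsLimit

variable {C : Type*} [Category C] [MonoidalCategory C] {T S K : C} [MonObj T] [MonObj S]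
  {u v : T ⟶ S} [IsMonHom u] [IsMonHom v] {i : K ⟶ T}

abbrev monObj {h : i ≫ u = i ≫ v} (hlim : IsLimit (Fork.ofι i h)) : MonObj K :=
  haveI : Mono i := mono hlim
  MonObj.ofMono i (lift hlim _ (MonObj.tensorHom_comp_mul_comp_eq h))
    (lift hlim MonObj.one (by rw [IsMonHom.one_hom, IsMonHom.one_hom]))
    (lift_ι' hlim _ _) (lift_ι' hlim _ _)

lemma isMonHom_ι {h : i ≫ u = i ≫ v} (hlim : IsLimit (Fork.ofι i h)) :
    letI := monObj hlim
    IsMonHom i :=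
  haveI : Mono i := mono hlim
  MonObj.isMonHom_ofMono ..

end CategoryTheory.Limits.Fork.IsLimit

theorem normal_conormal_stmt18_general
    {M : Type u} [Category.{v} M] [MonoidalCategory M] [BraidedCategory M]
    -- bimonoids `H`, `H'` and a bimonoid map `g : H' ⟶ H`
    (H H' : Bimon M) (g : H' ⟶ H)
    -- the classifying bundle `ξ(H) = (ΩH ⟶ 𝓟H ⟶ H)`, where `𝓟H` admits a monoid structure
    -- such that `i_H` and `p_H` are monoid morphisms:
    (P : Mon M) (p : P ⟶ H.X)
    -- the left `H`-coaction on `𝓟H`, as a monoid morphism: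
    (lam : P ⟶ H.X ⊗ P) :
    -- Conclusion: `ι_g : H ∖̃ H' ⟶ H'` is a monoid morphism, for the monoid structure
    -- inherited by the Borel kernel `H ∖̃ H' = H' □_H 𝓟H`.
    ∀ (K : M) (ι : K ⟶ H'.X.X ⊗ P.X)
      (hcomm : ι ≫ (((H'.comon.comul.hom ≫ (H'.X.X ◁ g.hom.hom)) ▷ P.X) ≫
          (α_ H'.X.X H.X.X P.X).hom) = ι ≫ (H'.X.X ◁ lam.hom))
      (_ : IsLimit (Fork.ofι ι hcomm)),
      ∃ (mulK : K ⊗ K ⟶ K) (oneK : 𝟙_ M ⟶ K),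
        (oneK ▷ K) ≫ mulK = (λ_ K).hom ∧
        (K ◁ oneK) ≫ mulK = (ρ_ K).hom ∧
        (mulK ▷ K) ≫ mulK = (α_ K K K).hom ≫ (K ◁ mulK) ≫ mulK ∧
        -- `ι_g = (H' □_H p_H)` is a monoid morphism:
        mulK ≫ (ι ≫ (H'.X.X ◁ (p.hom ≫ H.comon.counit.hom)) ≫ (ρ_ H'.X.X).hom) =
          (((ι ≫ (H'.X.X ◁ (p.hom ≫ H.comon.counit.hom)) ≫ (ρ_ H'.X.X).hom)) ⊗ₘ
            ((ι ≫ (H'.X.X ◁ (p.hom ≫ H.comon.counit.hom)) ≫ (ρ_ H'.X.X).hom))) ≫ H'.X.mon.mul ∧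
        oneK ≫ (ι ≫ (H'.X.X ◁ (p.hom ≫ H.comon.counit.hom)) ≫ (ρ_ H'.X.X).hom) = H'.X.mon.one := by
  intro K ι hcomm hlim
  let _ := Fork.IsLimit.monObj hlim
  have := Fork.IsLimit.isMonHom_ι hlim
  exact ⟨MonObj.mul, MonObj.one, MonObj.one_mul K, MonObj.mul_one K, MonObj.mul_assoc K,
    IsMonHom.mul_hom _, IsMonHom.one_hom _⟩

theorem normal_conormal_stmt18
    {M : Type u} [Category.{v} M] [MonoidalCategory M] [BraidedCategory M]
    [HasEqualizers M]
    -- bimonoids `H`, `H'` and a bimonoid map `g : H' ⟶ H`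
    (H H' : Bimon M) (g : H' ⟶ H)
    -- the classifying bundle `ξ(H) = (ΩH ⟶ 𝓟H ⟶ H)`, where `𝓟H` admits a monoid structure
    -- such that `i_H` and `p_H` are monoid morphisms:
    (Om P : Mon M) (i : Om ⟶ P) (p : P ⟶ H.X)
    -- the right `ΩH`-action on `𝓟H`, as a monoid morphism (`P ⊗ Om` is a monoid since `M`
    -- is braided):
    (ρA : P ⊗ Om ⟶ P)
    (act_unit : (P.X ◁ Om.mon.one) ≫ ρA.hom = (ρ_ P.X).hom)
    (act_assoc : (P.X ◁ Om.mon.mul) ≫ ρA.hom =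
      (α_ P.X Om.X Om.X).inv ≫ (ρA.hom ▷ Om.X) ≫ ρA.hom)
    -- `i_H` is equivariant: `i_H` is a map of right `ΩH`-modules
    (i_equiv : (i.hom ▷ Om.X) ≫ ρA.hom = Om.mon.mul ≫ i.hom)
    -- the left `H`-coaction on `𝓟H`, as a monoid morphism:
    (lam : P ⟶ H.X ⊗ P)
    (coact_counit : lam.hom ≫ (H.comon.counit.hom ▷ P.X) ≫ (λ_ P.X).hom = 𝟙 P.X)
    (coact_coassoc : lam.hom ≫ (H.comon.comul.hom ▷ P.X) ≫ (α_ H.X.X H.X.X P.X).hom =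
      lam.hom ≫ (H.X.X ◁ lam.hom))
    -- `p_H` is a map of left `H`-comodules
    (p_coact : lam.hom ≫ (H.X.X ◁ p.hom) = p.hom ≫ H.comon.comul.hom) :
    -- Conclusion: `ι_g : H ∖̃ H' ⟶ H'` is a monoid morphism, for the monoid structure
    -- inherited by the Borel kernel `H ∖̃ H' = H' □_H 𝓟H`.
    ∀ (K : M) (ι : K ⟶ H'.X.X ⊗ P.X)
      (hcomm : ι ≫ (((H'.comon.comul.hom ≫ (H'.X.X ◁ g.hom.hom)) ▷ P.X) ≫
          (α_ H'.X.X H.X.X P.X).hom) = ι ≫ (H'.X.X ◁ lam.hom))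
      (_ : IsLimit (Fork.ofι ι hcomm)),
      ∃ (mulK : K ⊗ K ⟶ K) (oneK : 𝟙_ M ⟶ K),
        (oneK ▷ K) ≫ mulK = (λ_ K).hom ∧
        (K ◁ oneK) ≫ mulK = (ρ_ K).hom ∧
        (mulK ▷ K) ≫ mulK = (α_ K K K).hom ≫ (K ◁ mulK) ≫ mulK ∧
        -- `ι_g = (H' □_H p_H)` is a monoid morphism:
        mulK ≫ (ι ≫ (H'.X.X ◁ (p.hom ≫ H.comon.counit.hom)) ≫ (ρ_ H'.X.X).hom) =
          (((ι ≫ (H'.X.X ◁ (p.hom ≫ H.comon.counit.hom)) ≫ (ρ_ H'.X.X).hom)) ⊗ₘ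
            ((ι ≫ (H'.X.X ◁ (p.hom ≫ H.comon.counit.hom)) ≫ (ρ_ H'.X.X).hom))) ≫ H'.X.mon.mul ∧
        oneK ≫ (ι ≫ (H'.X.X ◁ (p.hom ≫ H.comon.counit.hom)) ≫ (ρ_ H'.X.X).hom) = H'.X.mon.one :=
  normal_conormal_stmt18_general H H' g P p lam
end

section
/- Let g: X → Y be a simplicial map between reduced simplicial sets, Γ the Kan loop group functor, τ_X and τ_Y the universal twisting functions, and ι_g: X ×_{τ_Y g} ΓY → X the projection. Then the map (X ×_{τ_Y g} ΓY) ×_{τ_X ι_g} ΓX → (X ×_{τ_X} ΓX) × ΓY sending (x, v, w) to (x, w, Γ(g)(w)^{-1} · v) is an isomorphism of simplicial sets. -/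
/-!
Simplicial scaffolding: weak homotopy equivalences of simplicial sets, twisting functions,
twisted cartesian products, and the Kan loop group / classifying space adjunction
(characterized by the universal properties of the universal and couniversal twisting
functions), following Appendices A and B and Section 1.3.1 of Farjoun–Hess,
"Normal and conormal maps in homotopy theory".
-/

open CategoryTheory Simplicial Opposite Topology Topology.Homotopy

/-- image of a generalized loop under a continuous map -/
def GenLoop.push {N : Type} {X Y : Type} [TopologicalSpace X] [TopologicalSpace Y]
    (f : C(X, Y)) {x : X} (p : GenLoop N X x) : GenLoop N Y (f x) :=
  ⟨f.comp p.1, fun y hy => by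
    simp only [ContinuousMap.comp_apply, p.2 y hy]⟩

/-- the induced map on homotopy groups -/
def homotopyGroupMap (N : Type) {X Y : Type} [TopologicalSpace X] [TopologicalSpace Y]
    (f : C(X, Y)) (x : X) : HomotopyGroup N X x → HomotopyGroup N Y (f x) :=
  Quotient.map (GenLoop.push f)
    (fun _ _ h => Nonempty.map (fun H => H.compContinuousMap f) h)

/-- the induced map on path components -/
def zerothHomotopyMap {X Y : Type} [TopologicalSpace X] [TopologicalSpace Y]
    (f : C(X, Y)) : ZerothHomotopy X → ZerothHomotopy Y :=
  Quotient.map f (fun _ _ h => ⟨h.somePath.map f.continuous⟩)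

/-- A continuous map is a weak homotopy equivalence if it induces a bijection on path
components and isomorphisms on all homotopy groups at all basepoints. -/
def IsWeakHomotopyEquiv {X Y : Type} [TopologicalSpace X] [TopologicalSpace Y]
    (f : C(X, Y)) : Prop :=
  Function.Bijective (zerothHomotopyMap f) ∧
  ∀ (n : ℕ) (x : X), Function.Bijective (homotopyGroupMap (Fin (n + 1)) f x)

/-- The usual weak equivalences of simplicial sets: maps whose geometric realization is a
weak homotopy equivalence. -/
noncomputable def sWeq : MorphismProperty SSet.{0} :=
  fun _ _ f => IsWeakHomotopyEquiv (SSet.toTop.map f).hom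

/-- A simplicial set is contractible if its geometric realization is contractible. -/
def SContractible (X : SSet.{0}) : Prop :=
  ContractibleSpace (SSet.toTop.obj X)

/-- simplicial groups -/
abbrev SGrp := SimplicialObject GrpCat.{0}

/-- the underlying simplicial set of a simplicial group -/
noncomputable def sU : SGrp ⥤ SSet.{0} :=
  ((SimplicialObject.whiskering _ _).obj (forget GrpCat))

/-- A twisting function `τ : X → G` from a simplicial set to a simplicial group: a degree `-1`
map of graded sets satisfying `d₀ τ(x) = (τ (d₀ x))⁻¹ ⬝ τ (d₁ x)`, `dᵢ τ(x) = τ (dᵢ₊₁ x)` for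
`i > 0`, `sᵢ τ(x) = τ (sᵢ₊₁ x)` and `τ (s₀ x) = e`. -/
structure TwFn (X : SSet.{0}) (G : SGrp) where
  t : ∀ n : ℕ, X _⦋n + 1⦌ → G.obj (op ⦋n⦌)
  d₀ : ∀ (n : ℕ) (x : X _⦋n + 2⦌),
    (G.δ 0) (t (n + 1) x) = (t n (X.δ 0 x))⁻¹ * t n (X.δ 1 x)
  dsucc : ∀ (n : ℕ) (i : Fin (n + 1)) (x : X _⦋n + 2⦌),
    (G.δ i.succ) (t (n + 1) x) = t n (X.δ i.succ.succ x)
  s : ∀ (n : ℕ) (i : Fin (n + 1)) (x : X _⦋n + 1⦌),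
    (G.σ i) (t n x) = t (n + 1) (X.σ i.succ x)
  s₀ : ∀ (n : ℕ) (x : X _⦋n⦌), t n (X.σ 0 x) = 1

/-- The twisted cartesian product `X ×_τ G` of `X` and `G` (with `G` acting on itself by left
multiplication), presented as a simplicial set `P` with levelwise bijections
`P_n ≃ X_n × G_n` under which `d₀ (x, y) = (d₀ x, τ(x) ⬝ d₀ y)`, the remaining faces and the
degeneracies being componentwise, together with the projection onto `X`. -/
structure TCP (X : SSet.{0}) (G : SGrp) (τ : TwFn X G) where
  P : SSet.{0}
  e : ∀ n : ℕ, P _⦋n⦌ ≃ X _⦋n⦌ × G.obj (op ⦋n⦌)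
  d₀ : ∀ (n : ℕ) (p : P _⦋n + 1⦌),
    e n (P.δ 0 p) =
      (X.δ 0 (e (n + 1) p).1, τ.t n (e (n + 1) p).1 * (G.δ 0) (e (n + 1) p).2)
  dsucc : ∀ (n : ℕ) (i : Fin (n + 1)) (p : P _⦋n + 1⦌),
    e n (P.δ i.succ p) = (X.δ i.succ (e (n + 1) p).1, (G.δ i.succ) (e (n + 1) p).2)
  s : ∀ (n : ℕ) (i : Fin (n + 1)) (p : P _⦋n⦌),
    e (n + 1) (P.σ i p) = (X.σ i (e n p).1, (G.σ i) (e n p).2)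
  proj : P ⟶ X
  proj_eq : ∀ (n : ℕ) (p : P _⦋n⦌), proj.app (op ⦋n⦌) p = (e n p).1

/-- reduced: exactly one `0`-simplex -/
def SSet.IsReduced (X : SSet.{0}) : Prop :=
  Nonempty (X _⦋0⦌) ∧ Subsingleton (X _⦋0⦌)

/-- 1-reduced: exactly one `0`-simplex and exactly one `1`-simplex -/
def SSet.IsOneReduced (X : SSet.{0}) : Prop :=
  Nonempty (X _⦋0⦌) ∧ Subsingleton (X _⦋0⦌) ∧ Subsingleton (X _⦋1⦌)

/-- of finite type: finitely many simplices in each dimension -/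
def SSet.FinType (X : SSet.{0}) : Prop := ∀ n : ℕ, Finite (X _⦋n⦌)

/-- the `n`-fold degeneracy of a `0`-simplex -/
def SSet.ptOf (X : SSet.{0}) (x : X _⦋0⦌) (n : ℕ) : X _⦋n⦌ :=
  X.map (Quiver.Hom.op
    (show SimplexCategory.mk n ⟶ SimplexCategory.mk 0 from
      SimplexCategory.Hom.mk ⟨fun _ => 0, fun _ _ _ => le_refl _⟩)) x

/-- A pointed twisted cartesian product: a twisted cartesian product together with the
inclusion of the fibre `G` over (the degeneracies of) a `0`-simplex `x₀` of the base. -/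
structure PtdTCP (X : SSet.{0}) (x₀ : X _⦋0⦌) (G : SGrp) (τ : TwFn X G)
    extends TCP X G τ where
  incl : sU.obj G ⟶ P
  incl_eq : ∀ (n : ℕ) (w : G.obj (op ⦋n⦌)),
    e n (incl.app (op ⦋n⦌) w) = (X.ptOf x₀ n, w)

/-- The Kan loop group / classifying space adjunction, with the universal twisting functions
`τ_X : X → ΓX` and the couniversal twisting functions `ν_G : W̄G → G`, characterized by their
universal properties. -/
structure KanData where
  /-- the Kan loop group functor -/
  Γ : SSet.{0} ⥤ SGrp
  /-- the Kan classifying space functor -/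
  Wbar : SGrp ⥤ SSet.{0}
  Wbar_reduced : ∀ G : SGrp, (Wbar.obj G).IsReduced
  /-- the adjunction `Γ ⊣ W̄` -/
  adj : Γ ⊣ Wbar
  /-- the universal twisting function `τ_X : X → ΓX` -/
  τ : ∀ X : SSet.{0}, TwFn X (Γ.obj X)
  /-- universality of `τ_X`: it mediates a bijection between twisting functions with source
  `X` and simplicial group morphisms with source `ΓX` -/
  τ_universal : ∀ (X : SSet.{0}) (G : SGrp) (t : TwFn X G),
    ∃! φ : Γ.obj X ⟶ G, ∀ (n : ℕ) (x : X _⦋n + 1⦌),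
      φ.app (op ⦋n⦌) ((τ X).t n x) = t.t n x
  τ_natural : ∀ {X Y : SSet.{0}} (f : X ⟶ Y) (n : ℕ) (x : X _⦋n + 1⦌),
    (Γ.map f).app (op ⦋n⦌) ((τ X).t n x) = (τ Y).t n (f.app (op ⦋n + 1⦌) x)
  /-- the couniversal twisting function `ν_G : W̄G → G` -/
  ν : ∀ G : SGrp, TwFn (Wbar.obj G) G
  /-- couniversality of `ν_G`: it mediates a bijection between twisting functions with target
  `G` and simplicial maps with target `W̄G` -/
  ν_couniversal : ∀ (G : SGrp) (X : SSet.{0}) (t : TwFn X G),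
    ∃! φ : X ⟶ Wbar.obj G, ∀ (n : ℕ) (x : X _⦋n + 1⦌),
      t.t n x = (ν G).t n (φ.app (op ⦋n + 1⦌) x)
  /-- the unit of the adjunction classifies `τ_X` -/
  unit_char : ∀ (X : SSet.{0}) (n : ℕ) (x : X _⦋n + 1⦌),
    (ν (Γ.obj X)).t n ((adj.unit.app X).app (op ⦋n + 1⦌) x) = (τ X).t n x
  /-- the counit of the adjunction is induced by `ν_G` -/
  counit_char : ∀ (G : SGrp) (n : ℕ) (x : (Wbar.obj G) _⦋n + 1⦌),
    (adj.counit.app G).app (op ⦋n⦌) ((τ (Wbar.obj G)).t n x) = (ν G).t n x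

/-- the unique `0`-simplex of `W̄G` -/
noncomputable def KanData.wpt (K : KanData) (G : SGrp) : (K.Wbar.obj G) _⦋0⦌ :=
  (K.Wbar_reduced G).1.some

/-- An extended bundle of simplicial objects: a simplicial group `A`, simplicial sets
`Mo`, `N`, `C`, with maps `A → Mo → N → C` (the first a map of right `A`-sets, the last a
map over the comonoid `C`). -/
structure SExtBundle where
  A : SGrp
  Mo : SSet.{0}
  N : SSet.{0}
  C : SSet.{0}
  j : sU.obj A ⟶ Mo
  d : Mo ⟶ N
  p : N ⟶ C

/-- elementary (componentwise) weak equivalence of extended bundles -/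
def SElemEquiv (E F : SExtBundle) : Prop :=
  ∃ (α : E.A ⟶ F.A) (μ : E.Mo ⟶ F.Mo) (ν' : E.N ⟶ F.N) (β : E.C ⟶ F.C),
    sWeq (sU.map α) ∧ sWeq μ ∧ sWeq ν' ∧ sWeq β ∧
    E.j ≫ μ = sU.map α ≫ F.j ∧
    E.d ≫ ν' = μ ≫ F.d ∧
    E.p ≫ β = ν' ≫ F.p

/-- equivalence of extended bundles: a zigzag of elementary equivalences -/
def SBundleEquiv : SExtBundle → SExtBundle → Prop :=
  Relation.EqvGen SElemEquiv

namespace KanData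

variable (K : KanData)

/-- The truncated Nomura–Puppe sequence `τ(f) = (G' → G' ⫽ G → W̄G → W̄G')` of a morphism
`f : G ⟶ G'` of simplicial groups, where `G' ⫽ G = W̄G ×_{f ν_G} G'` is (a model of) the
Borel quotient. -/
noncomputable def sTau {G G' : SGrp} (f : G ⟶ G') {tq : TwFn (K.Wbar.obj G) G'}
    (Q : PtdTCP (K.Wbar.obj G) (K.wpt G) G' tq) : SExtBundle where
  A := G'
  Mo := Q.P
  N := K.Wbar.obj G
  C := K.Wbar.obj G'
  j := Q.incl
  d := Q.proj
  p := K.Wbar.map f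

/-- The truncated dual Nomura–Puppe sequence `θ(g) = (ΓX' → ΓX → X ∖̃ X' → X')` of a
simplicial map `g : X' ⟶ X`, where `X ∖̃ X' = X' ×_{τ_X g} ΓX` is (a model of) the Borel
kernel, i.e. the homotopy fiber. -/
noncomputable def sTheta {X' X : SSet.{0}} (x₀ : X' _⦋0⦌) (g : X' ⟶ X) {tk : TwFn X' (K.Γ.obj X)}
    (F : PtdTCP X' x₀ (K.Γ.obj X) tk) : SExtBundle where
  A := K.Γ.obj X'
  Mo := sU.obj (K.Γ.obj X)
  N := F.P
  C := X'
  j := sU.map (K.Γ.map g)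
  d := F.incl
  p := F.proj

/-- The pair `(f, g)` is normal: the truncated Nomura–Puppe sequence of the simplicial group
morphism `f` is equivalent, as an extended bundle, to the truncated dual Nomura–Puppe
sequence of the simplicial map `g`.  Then `f` is h-normal with normality structure `g`, and
`g` is h-conormal with conormality structure `f`. -/
def IsNormalPairS {G G' : SGrp} (f : G ⟶ G') {X' X : SSet.{0}} (x₀ : X' _⦋0⦌)
    (g : X' ⟶ X) : Prop :=
  ∃ (tq : TwFn (K.Wbar.obj G) G'),
    (∀ (n : ℕ) (x : (K.Wbar.obj G) _⦋n + 1⦌),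
      tq.t n x = f.app (op ⦋n⦌) ((K.ν G).t n x)) ∧
    ∃ (tk : TwFn X' (K.Γ.obj X)),
      (∀ (n : ℕ) (x : X' _⦋n + 1⦌),
        tk.t n x = (K.τ X).t n (g.app (op ⦋n + 1⦌) x)) ∧
      ∃ (Q : PtdTCP (K.Wbar.obj G) (K.wpt G) G' tq)
        (F : PtdTCP X' x₀ (K.Γ.obj X) tk),
        SBundleEquiv (K.sTau f Q) (K.sTheta x₀ g F)

/-- `f` is h-normal if there is a simplicial map `g` between reduced simplicial sets such
that `(f, g)` is a normal pair. -/
def IsHNormalS {G G' : SGrp} (f : G ⟶ G') : Prop :=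
  ∃ (X' X : SSet.{0}) (_ : X'.IsReduced) (_ : X.IsReduced) (x₀ : X' _⦋0⦌) (g : X' ⟶ X),
    K.IsNormalPairS f x₀ g

/-- `g` is h-conormal if there is a simplicial group morphism `f` such that `(f, g)` is a
normal pair. -/
def IsHConormalS {X' X : SSet.{0}} (x₀ : X' _⦋0⦌) (g : X' ⟶ X) : Prop :=
  ∃ (G G' : SGrp) (f : G ⟶ G'), K.IsNormalPairS f x₀ g

end KanData

open KanData

/-- the levelwise product of two simplicial sets -/
def sProd (A B : SSet.{0}) : SSet.{0} where
  obj n := A.obj n × B.obj n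
  map f := TypeCat.ofHom (fun p => (A.map f p.1, B.map f p.2))
  map_id n := by
    ext p <;> simp
  map_comp f g := by
    ext p <;> simp

/-!
The map `(x, v, w) ↦ (x, w, Γ(g)(w)⁻¹ ⬝ v)` is a levelwise bijection (a shear), so it suffices
that it commutes with faces and degeneracies, which act componentwise on the target. Only `d₀`
needs an argument: there the `ΓY`-coordinate becomes
`Γ(g)(τ_X x ⬝ d₀ w)⁻¹ ⬝ τ_Y(g x) ⬝ d₀ v`, and naturality `Γ(g) ∘ τ_X = τ_Y ∘ g` of the universal
twisting function cancels the two twists, leaving `d₀ (Γ(g)(w)⁻¹ ⬝ v)`. The same shear is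
therefore an isomorphism for any simplicial group morphism `φ : G ⟶ H` in place of `Γ(g)` and
twisting functions `τ : X → G`, `σ = φ ∘ τ : X → H` in place of `τ_X`, `τ_Y ∘ g`.
-/

namespace CategoryTheory.SimplicialObject

variable {C : Type*} [Category C] {X Y : SimplicialObject C}

lemma naturality_of_δ_of_σ (app : ∀ Δ : SimplexCategoryᵒᵖ, X.obj Δ ⟶ Y.obj Δ)
    (hδ : ∀ (n : ℕ) (i : Fin (n + 2)), X.δ i ≫ app (op ⦋n⦌) = app (op ⦋n + 1⦌) ≫ Y.δ i)
    (hσ : ∀ (n : ℕ) (i : Fin (n + 1)), X.σ i ≫ app (op ⦋n + 1⦌) = app (op ⦋n⦌) ≫ Y.σ i)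
    {Δ Δ' : SimplexCategoryᵒᵖ} (θ : Δ ⟶ Δ') : X.map θ ≫ app Δ' = app Δ ≫ Y.map θ := by
  have h := SimplexCategory.morphismProperty_eq_top
    (MorphismProperty.naturalityProperty app).unop (fun i => hδ _ i) (fun i => hσ _ i)
  exact (h ▸ trivial : (MorphismProperty.naturalityProperty app).unop θ.unop)

section Concrete

variable {FC : C → C → Type*} {CC : C → Type*} [∀ X Y, FunLike (FC X Y) (CC X) (CC Y)]
  [ConcreteCategory C FC] (f : X ⟶ Y)

lemma δ_naturality_apply {n : ℕ} (i : Fin (n + 2)) (x : ToType (X _⦋n + 1⦌)) :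
    f.app (op ⦋n⦌) (X.δ i x) = Y.δ i (f.app (op ⦋n + 1⦌) x) := by
  simpa only [ConcreteCategory.comp_apply] using ConcreteCategory.congr_hom (δ_naturality f i) x

lemma σ_naturality_apply {n : ℕ} (i : Fin (n + 1)) (x : ToType (X _⦋n⦌)) :
    f.app (op ⦋n + 1⦌) (X.σ i x) = Y.σ i (f.app (op ⦋n⦌) x) := by
  simpa only [ConcreteCategory.comp_apply] using ConcreteCategory.congr_hom (σ_naturality f i) x

end Concrete

end CategoryTheory.SimplicialObject

universe u

def SSet.isoOfEquivs {P Q : SSet.{u}} (e : ∀ n : ℕ, P _⦋n⦌ ≃ Q _⦋n⦌)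
    (hδ : ∀ (n : ℕ) (i : Fin (n + 2)) (p : P _⦋n + 1⦌), e n (P.δ i p) = Q.δ i (e (n + 1) p))
    (hσ : ∀ (n : ℕ) (i : Fin (n + 1)) (p : P _⦋n⦌), e (n + 1) (P.σ i p) = Q.σ i (e n p)) :
    P ≅ Q :=
  NatIso.ofComponents (fun Δ => (e Δ.unop.len).toIso)
    (fun θ => SimplicialObject.naturality_of_δ_of_σ (X := P) (Y := Q)
      (fun Δ => (e Δ.unop.len).toIso.hom) (fun n i => by ext p; exact hδ n i p)
      (fun n i => by ext p; exact hσ n i p) θ)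

namespace TCP

variable {X : SSet.{0}} {G H : SGrp} (φ : G ⟶ H) {τ : TwFn X G} {σ : TwFn X H}
  {B : TCP X H σ} {t : TwFn B.P G} (T : TCP B.P G t) (P : TCP X G τ)

def shearEquiv (n : ℕ) : T.P _⦋n⦌ ≃ P.P _⦋n⦌ × H.obj (op ⦋n⦌) where
  toFun p := ((P.e n).symm ((B.e n (T.e n p).1).1, (T.e n p).2),
    (φ.app (op ⦋n⦌) (T.e n p).2)⁻¹ * (B.e n (T.e n p).1).2)
  invFun q := (T.e n).symm
    ((B.e n).symm ((P.e n q.1).1, φ.app (op ⦋n⦌) (P.e n q.1).2 * q.2), (P.e n q.1).2)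
  left_inv p := by simp
  right_inv q := by simp

lemma shearEquiv_δ_zero
    (hστ : ∀ (n : ℕ) (x : X _⦋n + 1⦌), σ.t n x = φ.app (op ⦋n⦌) (τ.t n x))
    (ht : ∀ (n : ℕ) (b : B.P _⦋n + 1⦌), t.t n b = τ.t n (B.proj.app (op ⦋n + 1⦌) b))
    (n : ℕ) (p : T.P _⦋n + 1⦌) :
    shearEquiv φ T P n (T.P.δ 0 p) =
      (P.P.δ 0 (shearEquiv φ T P (n + 1) p).1, H.δ 0 (shearEquiv φ T P (n + 1) p).2) := by
  simp only [shearEquiv, Equiv.coe_fn_mk, T.d₀, B.d₀]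
  refine Prod.ext ?_ ?_
  · rw [Equiv.symm_apply_eq, P.d₀, Equiv.apply_symm_apply, ht, B.proj_eq]
  · rw [ht, B.proj_eq, hστ, map_mul, map_mul, map_inv, SimplicialObject.δ_naturality_apply]
    group

lemma shearEquiv_δ_succ (n : ℕ) (i : Fin (n + 1)) (p : T.P _⦋n + 1⦌) :
    shearEquiv φ T P n (T.P.δ i.succ p) =
      (P.P.δ i.succ (shearEquiv φ T P (n + 1) p).1,
        H.δ i.succ (shearEquiv φ T P (n + 1) p).2) := by
  simp only [shearEquiv, Equiv.coe_fn_mk, T.dsucc, B.dsucc]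
  refine Prod.ext ?_ ?_
  · rw [Equiv.symm_apply_eq, P.dsucc, Equiv.apply_symm_apply]
  · rw [map_mul, map_inv, SimplicialObject.δ_naturality_apply]

lemma shearEquiv_σ (n : ℕ) (i : Fin (n + 1)) (p : T.P _⦋n⦌) :
    shearEquiv φ T P (n + 1) (T.P.σ i p) =
      (P.P.σ i (shearEquiv φ T P n p).1, H.σ i (shearEquiv φ T P n p).2) := by
  simp only [shearEquiv, Equiv.coe_fn_mk, T.s, B.s]
  refine Prod.ext ?_ ?_
  · rw [Equiv.symm_apply_eq, P.s, Equiv.apply_symm_apply]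
  · rw [map_mul, map_inv, SimplicialObject.σ_naturality_apply]

noncomputable def shearIso
    (hστ : ∀ (n : ℕ) (x : X _⦋n + 1⦌), σ.t n x = φ.app (op ⦋n⦌) (τ.t n x))
    (ht : ∀ (n : ℕ) (b : B.P _⦋n + 1⦌), t.t n b = τ.t n (B.proj.app (op ⦋n + 1⦌) b)) :
    T.P ≅ sProd P.P (sU.obj H) :=
  SSet.isoOfEquivs (shearEquiv φ T P) (fun n i p => by
    induction i using Fin.cases with
    | zero => exact shearEquiv_δ_zero φ T P hστ ht n p
    | succ i => exact shearEquiv_δ_succ φ T P n i p) (shearEquiv_σ φ T P)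

end TCP

theorem normal_conormal_stmt19_general (K : KanData)
    {X Y : SSet.{0}} (g : X ⟶ Y)
    -- the twisted cartesian product `B = X ×_{τ_Y g} Γ Y`, with projection `ι_g`
    (tg : TwFn X (K.Γ.obj Y))
    (htg : ∀ (n : ℕ) (x : X _⦋n + 1⦌), tg.t n x = (K.τ Y).t n (g.app (op ⦋n + 1⦌) x))
    (B : TCP X (K.Γ.obj Y) tg)
    -- the twisted cartesian product `(X ×_{τ_Y g} ΓY) ×_{τ_X ι_g} Γ X`
    (t₂ : TwFn B.P (K.Γ.obj X))
    (ht₂ : ∀ (n : ℕ) (p : B.P _⦋n + 1⦌),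
      t₂.t n p = (K.τ X).t n (B.proj.app (op ⦋n + 1⦌) p))
    (T₂ : TCP B.P (K.Γ.obj X) t₂)
    -- the twisted cartesian product `X ×_{τ_X} Γ X`
    (P₁ : TCP X (K.Γ.obj X) (K.τ X)) :
    ∃ m : T₂.P ≅ sProd P₁.P (sU.obj (K.Γ.obj Y)),
      ∀ (n : ℕ) (p : T₂.P _⦋n⦌),
        m.hom.app (op ⦋n⦌) p =
          ((P₁.e n).symm ((B.e n (T₂.e n p).1).1, (T₂.e n p).2),
            ((K.Γ.map g).app (op ⦋n⦌) (T₂.e n p).2)⁻¹ * (B.e n (T₂.e n p).1).2) := by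
  have htg_eq_Γ_map : ∀ (n : ℕ) (x : X _⦋n + 1⦌),
      tg.t n x = (K.Γ.map g).app (op ⦋n⦌) ((K.τ X).t n x) := fun n x => by
    rw [htg, K.τ_natural]
  exact ⟨TCP.shearIso (K.Γ.map g) T₂ P₁ htg_eq_Γ_map ht₂, fun _ _ => rfl⟩

/-- (Part of the proof of Lemma 2.14 of the paper.)  Let `g : X ⟶ Y` be a
simplicial map between reduced simplicial sets, `Γ` the Kan loop group functor, `τ_X` and
`τ_Y` the universal twisting functions, and `ι_g : X ×_{τ_Y g} ΓY ⟶ X` the projection.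
Then the map `(X ×_{τ_Y g} ΓY) ×_{τ_X ι_g} ΓX ⟶ (X ×_{τ_X} ΓX) × ΓY` sending `(x, v, w)`
to `(x, w, Γ(g)(w)⁻¹ ⬝ v)` is an isomorphism of simplicial sets. -/
theorem normal_conormal_stmt19 (K : KanData)
    {X Y : SSet.{0}} (hX : X.IsReduced) (hY : Y.IsReduced) (g : X ⟶ Y)
    -- the twisted cartesian product `B = X ×_{τ_Y g} Γ Y`, with projection `ι_g`
    (tg : TwFn X (K.Γ.obj Y))
    (htg : ∀ (n : ℕ) (x : X _⦋n + 1⦌), tg.t n x = (K.τ Y).t n (g.app (op ⦋n + 1⦌) x))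
    (B : TCP X (K.Γ.obj Y) tg)
    -- the twisted cartesian product `(X ×_{τ_Y g} ΓY) ×_{τ_X ι_g} Γ X`
    (t₂ : TwFn B.P (K.Γ.obj X))
    (ht₂ : ∀ (n : ℕ) (p : B.P _⦋n + 1⦌),
      t₂.t n p = (K.τ X).t n (B.proj.app (op ⦋n + 1⦌) p))
    (T₂ : TCP B.P (K.Γ.obj X) t₂)
    -- the twisted cartesian product `X ×_{τ_X} Γ X`
    (P₁ : TCP X (K.Γ.obj X) (K.τ X)) :
    ∃ m : T₂.P ≅ sProd P₁.P (sU.obj (K.Γ.obj Y)),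
      ∀ (n : ℕ) (p : T₂.P _⦋n⦌),
        m.hom.app (op ⦋n⦌) p =
          ((P₁.e n).symm ((B.e n (T₂.e n p).1).1, (T₂.e n p).2),
            ((K.Γ.map g).app (op ⦋n⦌) (T₂.e n p).2)⁻¹ * (B.e n (T₂.e n p).1).2) :=
  normal_conormal_stmt19_general K g tg htg B t₂ ht₂ T₂ P₁
end
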